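/- Let X^n = (X₁,...,Xₙ) be a random vector and Y^n its output through a memoryless channel (i.e., the Yᵢ are conditionally independent given X^n, with Yᵢ depending only on Xᵢ). Then I(X^n; Y^n) = I(X^{n-1}; Y^{n-1}) + I(Xₙ; Yₙ) - I(Y^{n-1}; Yₙ). -/
import Mathlib


open Finset

/-- Shannon entropy (in bits) of a pmf on a finite type (convention `0·log 0 = 0`
holds since `Real.logb 2 0 = 0`). -/
noncomputable def H2 {α : Type*} [Fintype α] (p : α → ℝ) : ℝ :=
  -∑ x, p x * Real.logb 2 (p x)

/-- `p` is a probability mass function. -/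
def IsPMF {α : Type*} [Fintype α] (p : α → ℝ) : Prop :=
  (∀ x, 0 ≤ p x) ∧ ∑ x, p x = 1

/-- Left marginal of a joint pmf. -/
noncomputable def margL {α β : Type*} [Fintype α] [Fintype β] (p : α × β → ℝ) : α → ℝ :=
  fun a => ∑ b, p (a, b)

/-- Right marginal of a joint pmf. -/
noncomputable def margR {α β : Type*} [Fintype α] [Fintype β] (p : α × β → ℝ) : β → ℝ :=
  fun b => ∑ a, p (a, b)

/-- Mutual information (in bits) of a joint pmf: `I = H(X) + H(Y) - H(X,Y)`. -/
noncomputable def MI {α β : Type*} [Fintype α] [Fintype β] (p : α × β → ℝ) : ℝ :=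
  H2 (margL p) + H2 (margR p) - H2 p

lemma mul_logb_mul (a b : ℝ) : a * b * Real.logb 2 (a * b)
    = a * b * Real.logb 2 a + a * b * Real.logb 2 b := by
  rcases eq_or_ne a 0 with h | h
  · simp [h]
  rcases eq_or_ne b 0 with h' | h'
  · simp [h']
  rw [Real.logb_mul h h', mul_add]

lemma chainH {α β : Type*} [Fintype α] [Fintype β] (p : α → ℝ) (K : α → β → ℝ)
    (hK : ∀ a, ∑ b, K a b = 1) :
    H2 (fun ab : α × β => p ab.1 * K ab.1 ab.2) = H2 p + ∑ a, p a * H2 (K a) := by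
  unfold H2
  rw [Fintype.sum_prod_type]
  have step : ∀ a : α, ∑ b, p a * K a b * Real.logb 2 (p a * K a b)
      = p a * Real.logb 2 (p a) + p a * ∑ b, K a b * Real.logb 2 (K a b) := by
    intro a
    have h1 : ∀ b : β, p a * K a b * Real.logb 2 (p a * K a b)
        = p a * Real.logb 2 (p a) * K a b + p a * (K a b * Real.logb 2 (K a b)) := by
      intro b; rw [mul_logb_mul]; ring
    rw [Finset.sum_congr rfl (fun b _ => h1 b), Finset.sum_add_distrib,
        ← Finset.mul_sum, ← Finset.mul_sum, hK a, mul_one]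
  rw [Finset.sum_congr rfl (fun a _ => step a), Finset.sum_add_distrib, neg_add]
  congr 1
  rw [← Finset.sum_neg_distrib]
  exact Finset.sum_congr rfl (fun a _ => by ring)


/-- Chain-rule identity for a memoryless channel:
`I(Xⁿ;Yⁿ) = I(Xⁿ⁻¹;Yⁿ⁻¹) + I(Xₙ;Yₙ) - I(Yⁿ⁻¹;Yₙ)`, where the last input/output pair
is split off explicitly. -/
theorem mi_chain_rule_memoryless {γ β : Type*} [Fintype γ] [Fintype β] (n : ℕ)
    (pX : ((Fin n → γ) × γ) → ℝ) (hpX : IsPMF pX)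
    (W : Fin n → γ → β → ℝ) (Wlast : γ → β → ℝ)
    (hW : ∀ i x, IsPMF (W i x)) (hWlast : ∀ x, IsPMF (Wlast x))
    (q : ((Fin n → γ) × γ) × ((Fin n → β) × β) → ℝ)
    (hq : ∀ x xn y yn, q ((x, xn), (y, yn)) =
      pX (x, xn) * (∏ i, W i (x i) (y i)) * Wlast xn yn) :
    MI q =
      MI (fun xy : (Fin n → γ) × (Fin n → β) => ∑ xn, ∑ yn, q ((xy.1, xn), (xy.2, yn)))
      + MI (fun xy : γ × β => ∑ x, ∑ y, q ((x, xy.1), (y, xy.2)))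
      - MI (fun yy : (Fin n → β) × β => ∑ x, ∑ xn, q ((x, xn), (yy.1, yy.2))) := by
  -- notation
  set K1 : (Fin n → γ) → (Fin n → β) → ℝ := fun x y => ∏ i, W i (x i) (y i) with hK1def
  set pX1 : (Fin n → γ) → ℝ := fun x => ∑ xn, pX (x, xn) with hpX1def
  set pX2 : γ → ℝ := fun xn => ∑ x, pX (x, xn) with hpX2def
  have hWlsum : ∀ xn, ∑ yn, Wlast xn yn = 1 := fun xn => (hWlast xn).2
  have hK1sum : ∀ x, ∑ y, K1 x y = 1 := by
    intro x
    have h := Finset.prod_univ_sum (fun _ : Fin n => (univ : Finset β))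
      (fun i b => W i (x i) b)
    rw [Fintype.piFinset_univ] at h
    rw [hK1def]
    simp only [← h]
    rw [Finset.prod_congr rfl (fun i _ => (hW i (x i)).2), Finset.prod_const_one]
  set p1 : (Fin n → γ) × (Fin n → β) → ℝ :=
    fun xy => ∑ xn, ∑ yn, q ((xy.1, xn), (xy.2, yn)) with hp1def
  set p2 : γ × β → ℝ := fun xy => ∑ x, ∑ y, q ((x, xy.1), (y, xy.2)) with hp2def
  set p3 : (Fin n → β) × β → ℝ :=
    fun yy => ∑ x, ∑ xn, q ((x, xn), (yy.1, yy.2)) with hp3def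
  -- product forms
  have hqeq : q = fun z => pX z.1 * (K1 z.1.1 z.2.1 * Wlast z.1.2 z.2.2) := by
    funext z
    obtain ⟨⟨x, xn⟩, ⟨y, yn⟩⟩ := z
    rw [hq]; ring
  have hp1eq : p1 = fun xy => pX1 xy.1 * K1 xy.1 xy.2 := by
    funext xy
    rw [hp1def]
    simp only [hqeq]
    calc ∑ xn, ∑ yn, pX (xy.1, xn) * (K1 xy.1 xy.2 * Wlast xn yn)
        = ∑ xn, pX (xy.1, xn) * K1 xy.1 xy.2 * ∑ yn, Wlast xn yn := by
          refine Finset.sum_congr rfl fun xn _ => ?_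
          rw [Finset.mul_sum]
          exact Finset.sum_congr rfl fun yn _ => by ring
      _ = ∑ xn, pX (xy.1, xn) * K1 xy.1 xy.2 := by simp only [hWlsum, mul_one]
      _ = pX1 xy.1 * K1 xy.1 xy.2 := by rw [hpX1def, Finset.sum_mul]
  have hp2eq : p2 = fun xy => pX2 xy.1 * Wlast xy.1 xy.2 := by
    funext xy
    rw [hp2def]
    simp only [hqeq]
    calc ∑ x, ∑ y, pX (x, xy.1) * (K1 x y * Wlast xy.1 xy.2)
        = ∑ x, pX (x, xy.1) * Wlast xy.1 xy.2 * ∑ y, K1 x y := by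
          refine Finset.sum_congr rfl fun x _ => ?_
          rw [Finset.mul_sum]
          exact Finset.sum_congr rfl fun y _ => by ring
      _ = ∑ x, pX (x, xy.1) * Wlast xy.1 xy.2 := by
          simp only [hK1sum, mul_one]
      _ = pX2 xy.1 * Wlast xy.1 xy.2 := by rw [hpX2def, Finset.sum_mul]
  -- marginals
  have hmLq : margL q = pX := by
    funext z
    obtain ⟨x, xn⟩ := z
    rw [margL, Fintype.sum_prod_type]
    simp only [hqeq]
    simp only [← Finset.mul_sum, hWlsum, mul_one]
    rw [hK1sum x, mul_one]
  have hmRq : margR q = p3 := by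
    funext yy
    rw [margR, Fintype.sum_prod_type, hp3def]
  have hmLp1 : margL p1 = pX1 := by
    funext x
    rw [margL]
    simp only [hp1eq, ← Finset.mul_sum, hK1sum x, mul_one]
  have hmLp2 : margL p2 = pX2 := by
    funext xn
    rw [margL]
    simp only [hp2eq, ← Finset.mul_sum, hWlsum xn, mul_one]
  have hmRp1 : margR p1 = margL p3 := by
    funext y
    simp only [margR, margL, hp3def, hp1def]
    calc ∑ x, ∑ xn, ∑ yn, q ((x, xn), (y, yn))
        = ∑ x, ∑ yn, ∑ xn, q ((x, xn), (y, yn)) :=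
          Finset.sum_congr rfl fun x _ => Finset.sum_comm
      _ = ∑ yn, ∑ x, ∑ xn, q ((x, xn), (y, yn)) := Finset.sum_comm
  have hmRp2 : margR p2 = margR p3 := by
    funext yn
    simp only [margR, hp2def, hp3def]
    calc ∑ xn, ∑ x, ∑ y, q ((x, xn), (y, yn))
        = ∑ x, ∑ xn, ∑ y, q ((x, xn), (y, yn)) := Finset.sum_comm
      _ = ∑ x, ∑ y, ∑ xn, q ((x, xn), (y, yn)) :=
          Finset.sum_congr rfl fun x _ => Finset.sum_comm
      _ = ∑ y, ∑ x, ∑ xn, q ((x, xn), (y, yn)) := Finset.sum_comm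
  -- entropies via chain rule
  have hHq : H2 q = H2 pX + ∑ z : (Fin n → γ) × γ,
      pX z * (H2 (K1 z.1) + H2 (Wlast z.2)) := by
    rw [hqeq]
    have := chainH pX (fun z : (Fin n → γ) × γ =>
        fun yp : (Fin n → β) × β => K1 z.1 yp.1 * Wlast z.2 yp.2)
      (by
        intro z
        rw [Fintype.sum_prod_type]
        simp only [← Finset.mul_sum, hWlsum, mul_one]
        exact hK1sum z.1)
    rw [this]
    congr 1
    refine Finset.sum_congr rfl fun z _ => ?_
    congr 1
    have h2 := chainH (K1 z.1) (fun _ : Fin n → β => Wlast z.2) (fun _ => hWlsum z.2)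
    rw [h2, ← Finset.sum_mul, hK1sum z.1, one_mul]
  have hHp1 : H2 p1 = H2 pX1 + ∑ x, pX1 x * H2 (K1 x) := by
    rw [hp1eq]; exact chainH pX1 K1 hK1sum
  have hHp2 : H2 p2 = H2 pX2 + ∑ xn, pX2 xn * H2 (Wlast xn) := by
    rw [hp2eq]; exact chainH pX2 Wlast hWlsum
  -- the key sum identity
  have hsum : ∑ z : (Fin n → γ) × γ, pX z * (H2 (K1 z.1) + H2 (Wlast z.2))
      = (∑ x, pX1 x * H2 (K1 x)) + ∑ xn, pX2 xn * H2 (Wlast xn) := by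
    rw [Fintype.sum_prod_type]
    simp only [mul_add, Finset.sum_add_distrib]
    congr 1
    · rw [hpX1def]
      simp only [Finset.sum_mul]
    · rw [hpX2def, Finset.sum_comm]
      simp only [Finset.sum_mul]
  -- conclude
  simp only [MI, ← hp1def, ← hp2def, ← hp3def]
  rw [hmLq, hmRq, hmLp1, hmLp2, hmRp1, hmRp2, hHq, hHp1, hHp2, hsum]
  ring
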